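/- arXiv:1811.04923 — 6 statements merged into one kernel-verified Lean document; each statement's English description precedes it below -/
import Mathlib

section
/- For every base B ≥ 2 there exists a 3×3 base-B lunar magic square with pairwise distinct entries. -/
/-- The `d`-th base-`B` digit of `n` (position 0 is the least significant digit). -/
def lunarDigit (B n d : ℕ) : ℕ := n / B ^ d % B

/-- Base-`B` lunar addition: the `d`-th digit of `x ⊕ y` is the maximum of the
`d`-th digits of `x` and `y` (no carries). -/
def lunarAdd (B x y : ℕ) : ℕ :=
  ∑ d ∈ Finset.range (x + y + 1), max (lunarDigit B x d) (lunarDigit B y d) * B ^ d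

/-- Base-`B` lunar multiplication: the `d`-th digit of `x ⊗ y` is the maximum over
`j + k = d` of the minimum of the `j`-th digit of `x` and the `k`-th digit of `y`. -/
def lunarMul (B x y : ℕ) : ℕ :=
  ∑ d ∈ Finset.range (x + y + 1),
    ((Finset.range (d + 1)).sup fun j => min (lunarDigit B x j) (lunarDigit B y (d - j))) * B ^ d

/-- `M` is a 3×3 base-`B` lunar magic square with total `T`: the lunar sums of the
three rows, the three columns, and the two diagonals all equal `T`. -/
def IsLunarMagic (B : ℕ) (M : Fin 3 → Fin 3 → ℕ) (T : ℕ) : Prop :=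
  (∀ i, lunarAdd B (lunarAdd B (M i 0) (M i 1)) (M i 2) = T) ∧
  (∀ j, lunarAdd B (lunarAdd B (M 0 j) (M 1 j)) (M 2 j) = T) ∧
  lunarAdd B (lunarAdd B (M 0 0) (M 1 1)) (M 2 2) = T ∧
  lunarAdd B (lunarAdd B (M 0 2) (M 1 1)) (M 2 0) = T

/-- The nine entries of `M` are pairwise distinct. -/
def DistinctEntries (M : Fin 3 → Fin 3 → ℕ) : Prop :=
  ∀ i j i' j', M i j = M i' j' → i = i' ∧ j = j'

def S (B : ℕ) (c : ℕ → ℕ) (N : ℕ) : ℕ := ∑ k ∈ Finset.range N, c k * B ^ k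

lemma S_succ (B : ℕ) (c : ℕ → ℕ) (m : ℕ) :
    S B c (m + 1) = B * S B (fun k => c (k + 1)) m + c 0 := by
  rw [S, Finset.sum_range_succ']
  simp only [pow_zero, mul_one, S, Finset.mul_sum]
  congr 1
  apply Finset.sum_congr rfl
  intro k _
  ring

lemma digit_S (B : ℕ) (hB : 2 ≤ B) (c : ℕ → ℕ) (hc : ∀ k, c k < B) (N d : ℕ) :
    lunarDigit B (S B c N) d = if d < N then c d else 0 := by
  induction d generalizing c N with
  | zero =>
    cases N with
    | zero => simp [lunarDigit, S]
    | succ m =>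
      rw [S_succ]
      simp only [lunarDigit, pow_zero, Nat.div_one]
      rw [Nat.mul_add_mod, Nat.mod_eq_of_lt (hc 0)]
      simp
  | succ d ih =>
    have key : lunarDigit B (S B c N) (d + 1) = lunarDigit B (S B c N / B) d := by
      simp only [lunarDigit, Nat.div_div_eq_div_mul, pow_succ']
    cases N with
    | zero =>
      simp only [S, Finset.range_zero, Finset.sum_empty] at key ⊢
      simp [lunarDigit]
    | succ m =>
      rw [key, S_succ, Nat.mul_add_div (by omega), Nat.div_eq_of_lt (hc 0), add_zero,
        ih _ (fun k => hc (k + 1))]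
      simp only [Nat.add_lt_add_iff_right]

lemma lunarAdd_S (B : ℕ) (hB : 2 ≤ B) (a b : ℕ → ℕ) (ha : ∀ k, a k < B) (hb : ∀ k, b k < B)
    (hN : 10 ≤ S B a 10 + S B b 10 + 1) :
    lunarAdd B (S B a 10) (S B b 10) = S B (fun k => max (a k) (b k)) 10 := by
  rw [lunarAdd]
  have h1 : ∀ d, max (lunarDigit B (S B a 10) d) (lunarDigit B (S B b 10) d) * B ^ d
      = (if d < 10 then max (a d) (b d) * B ^ d else 0) := by
    intro d
    rw [digit_S B hB a ha, digit_S B hB b hb]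
    split_ifs <;> simp
  rw [Finset.sum_congr rfl (fun d _ => h1 d)]
  have h2 := Finset.sum_subset (f := fun d => if d < 10 then max (a d) (b d) * B ^ d else 0)
    (Finset.range_subset_range.2 hN)
    (fun d _ hd => by
      rw [Finset.mem_range, not_lt] at hd
      show (if d < 10 then max (a d) (b d) * B ^ d else 0) = 0
      rw [if_neg (by omega)])
  rw [← h2, S]
  exact Finset.sum_congr rfl fun d hd => by
    rw [Finset.mem_range] at hd
    show (if d < 10 then max (a d) (b d) * B ^ d else 0) = max (a d) (b d) * B ^ d
    rw [if_pos hd]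

lemma S_ge (B : ℕ) (hB : 2 ≤ B) (a : ℕ → ℕ) (h9 : a 9 = 1) : 10 ≤ S B a 10 := by
  have h1 : a 9 * B ^ 9 ≤ S B a 10 :=
    Finset.single_le_sum (f := fun k => a k * B ^ k) (fun _ _ => Nat.zero_le _)
      (by simp : (9 : ℕ) ∈ Finset.range 10)
  have h2 : 2 ^ 9 ≤ B ^ 9 := Nat.pow_le_pow_left hB 9
  rw [h9, one_mul] at h1
  omega

/-- entry omitting digit `o` -/
def E (B o : ℕ) : ℕ := S B (fun k => if k < 10 ∧ k ≠ o then 1 else 0) 10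

lemma lineSum (B : ℕ) (hB : 2 ≤ B) (o₁ o₂ o₃ : ℕ) (h₁ : o₁ ≠ o₂) (h₂ : o₁ ≠ o₃) (h₃ : o₂ ≠ o₃)
    (b₁ : o₁ ≤ 8) (b₂ : o₂ ≤ 8) (b₃ : o₃ ≤ 8) :
    lunarAdd B (lunarAdd B (E B o₁) (E B o₂)) (E B o₃) =
      S B (fun k => if k < 10 then 1 else 0) 10 := by
  unfold E
  have hlt : ∀ o k, (if k < 10 ∧ k ≠ o then 1 else 0) < B := by
    intro o k; split_ifs <;> omega
  have hone : ∀ o, o ≤ 8 → (if (9:ℕ) < 10 ∧ (9:ℕ) ≠ o then 1 else 0) = 1 :=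
    fun o ho => if_pos ⟨by norm_num, by omega⟩
  have g1 := S_ge B hB (fun k => if k < 10 ∧ k ≠ o₁ then 1 else 0) (hone o₁ b₁)
  have g2 := S_ge B hB (fun k => if k < 10 ∧ k ≠ o₂ then 1 else 0) (hone o₂ b₂)
  have g3 := S_ge B hB (fun k => if k < 10 ∧ k ≠ o₃ then 1 else 0) (hone o₃ b₃)
  rw [lunarAdd_S B hB _ _ (hlt o₁) (hlt o₂) (by omega)]
  have g12 := S_ge B hB
    (fun k => max (if k < 10 ∧ k ≠ o₁ then 1 else 0) (if k < 10 ∧ k ≠ o₂ then 1 else 0))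
    (by show max (if (9:ℕ) < 10 ∧ (9:ℕ) ≠ o₁ then 1 else 0)
          (if (9:ℕ) < 10 ∧ (9:ℕ) ≠ o₂ then 1 else 0) = 1
        rw [hone o₁ b₁, hone o₂ b₂]; exact max_self 1)
  rw [lunarAdd_S B hB _ _ (fun k => by split_ifs <;> omega) (hlt o₃) (by omega)]
  congr 1
  funext k
  split_ifs <;> simp_all <;> omega

lemma E_inj (B : ℕ) (hB : 2 ≤ B) (o o' : ℕ) (ho : o ≤ 8) (ho' : o' ≤ 8) (h : E B o = E B o') :
    o = o' := by
  by_contra hne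
  have hlt : ∀ o k, (if k < 10 ∧ k ≠ o then 1 else 0) < B := by
    intro o k; split_ifs <;> omega
  have d1 := digit_S B hB _ (hlt o) 10 o
  have d2 := digit_S B hB _ (hlt o') 10 o
  rw [if_pos (show o < 10 by omega)] at d1 d2
  rw [if_neg (show ¬(o < 10 ∧ o ≠ o) by simp)] at d1
  rw [if_pos ⟨show o < 10 by omega, hne⟩] at d2
  have key : lunarDigit B (E B o) o = lunarDigit B (E B o') o := by rw [h]
  unfold E at key
  rw [d1, d2] at key
  exact absurd key (by norm_num)

theorem stmt_2 (B : ℕ) (hB : 2 ≤ B) :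
    ∃ (M : Fin 3 → Fin 3 → ℕ) (T : ℕ), IsLunarMagic B M T ∧ DistinctEntries M := by
  refine ⟨fun i j => E B (3 * i.val + j.val), S B (fun k => if k < 10 then 1 else 0) 10,
    ⟨?_, ?_, ?_, ?_⟩, ?_⟩
  · intro i
    have hi := i.isLt
    simp only [Fin.val_zero, Fin.val_one, Fin.val_two]
    exact lineSum B hB _ _ _ (by omega) (by omega) (by omega) (by omega) (by omega) (by omega)
  · intro j
    have hj := j.isLt
    simp only [Fin.val_zero, Fin.val_one, Fin.val_two]
    exact lineSum B hB _ _ _ (by omega) (by omega) (by omega) (by omega) (by omega) (by omega)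
  · simp only [Fin.val_zero, Fin.val_one, Fin.val_two]
    exact lineSum B hB _ _ _ (by omega) (by omega) (by omega) (by omega) (by omega) (by omega)
  · simp only [Fin.val_zero, Fin.val_one, Fin.val_two]
    exact lineSum B hB _ _ _ (by omega) (by omega) (by omega) (by omega) (by omega) (by omega)
  · intro i j i' j' h
    have hi := i.isLt
    have hj := j.isLt
    have hi' := i'.isLt
    have hj' := j'.isLt
    have := E_inj B hB _ _ (by omega) (by omega) h
    exact ⟨Fin.ext (by omega), Fin.ext (by omega)⟩
end

section
/- Digit extraction preserves magic: if M is a 3×3 base-B lunar magic square with total T, then for every digit position d, the 3×3 matrix whose (i,j) entry is (the d-th base-B digit of M i j) · B^d is also a base-B lunar magic square, with total (the d-th base-B digit of T) · B^d. -/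
/-! Lunar addition acts digitwise: the `d`-th digit of `x ⊕ y` is the maximum of the `d`-th
digits of `x` and `y`. So reading off digit `d` of each line equation of `M` gives an equation
between digits, and on numbers `a * B ^ d` with a single digit `a < B` in position `d`, lunar
addition is `a * B ^ d ⊕ b * B ^ d = max a b * B ^ d`. -/

section LunarDigits

variable {B : ℕ}

lemma lunarDigit_lt (hB : 0 < B) (n d : ℕ) : lunarDigit B n d < B :=
  Nat.mod_lt _ hB

lemma lunarDigit_eq_zero_of_lt_pow {n d : ℕ} (h : n < B ^ d) : lunarDigit B n d = 0 := by
  simp [lunarDigit, Nat.div_eq_of_lt h]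

lemma lunarDigit_of_lt_base {c : ℕ} (hc : c < B) (e : ℕ) :
    lunarDigit B c e = if e = 0 then c else 0 := by
  split_ifs with he
  · simp [lunarDigit, he, Nat.mod_eq_of_lt hc]
  · exact lunarDigit_eq_zero_of_lt_pow
      (hc.trans_le (le_self_pow₀ (by omega : 1 ≤ B) he))

lemma lunarDigit_add_mul_pow (hB : 0 < B) {a N : ℕ} (ha : a < B ^ N) (c d : ℕ) :
    lunarDigit B (a + c * B ^ N) d =
      if d < N then lunarDigit B a d else lunarDigit B c (d - N) := by
  unfold lunarDigit
  split_ifs with hd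
  · obtain ⟨k, rfl⟩ := Nat.exists_eq_add_of_lt hd
    have hsplit : c * B ^ (d + k + 1) = B ^ d * (B * (c * B ^ k)) := by ring
    rw [hsplit, Nat.add_mul_div_left _ _ (pow_pos hB d), Nat.add_mul_mod_self_left]
  · obtain ⟨k, rfl⟩ := Nat.exists_eq_add_of_le (not_lt.mp hd)
    rw [Nat.add_sub_cancel_left, pow_add, ← Nat.div_div_eq_div_mul,
      Nat.add_mul_div_right _ _ (pow_pos hB N), Nat.div_eq_of_lt ha, zero_add]

lemma sum_range_mul_pow_lt (hB : 0 < B) {c : ℕ → ℕ} (hc : ∀ e, c e < B) (N : ℕ) :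
    ∑ e ∈ Finset.range N, c e * B ^ e < B ^ N := by
  induction N with
  | zero => simp
  | succ N ih =>
    calc ∑ e ∈ Finset.range (N + 1), c e * B ^ e
        = ∑ e ∈ Finset.range N, c e * B ^ e + c N * B ^ N := Finset.sum_range_succ _ _
      _ < B ^ N + (B - 1) * B ^ N :=
          Nat.add_lt_add_of_lt_of_le ih (Nat.mul_le_mul_right _ (by have := hc N; omega))
      _ = B ^ (N + 1) := by
          zify [(by omega : 1 ≤ B)]
          ring

lemma lunarDigit_sum_range (hB : 0 < B) {c : ℕ → ℕ} (hc : ∀ e, c e < B) (N d : ℕ) :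
    lunarDigit B (∑ e ∈ Finset.range N, c e * B ^ e) d = if d < N then c d else 0 := by
  induction N with
  | zero => simp [lunarDigit]
  | succ N ih =>
    rw [Finset.sum_range_succ, lunarDigit_add_mul_pow hB (sum_range_mul_pow_lt hB hc N),
      ih, lunarDigit_of_lt_base (hc N)]
    split_ifs <;> grind

lemma lunarDigit_mul_pow (hB : 0 < B) {a : ℕ} (ha : a < B) (d e : ℕ) :
    lunarDigit B (a * B ^ d) e = if e = d then a else 0 := by
  have h := lunarDigit_add_mul_pow hB (pow_pos hB d) a e
  rw [zero_add] at h
  rw [h, lunarDigit_of_lt_base ha]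
  split_ifs <;> first | omega | simp [lunarDigit]

lemma lunarDigit_lunarAdd (hB : 2 ≤ B) (x y d : ℕ) :
    lunarDigit B (lunarAdd B x y) d = max (lunarDigit B x d) (lunarDigit B y d) := by
  have hB0 : 0 < B := by omega
  rw [lunarAdd, lunarDigit_sum_range hB0
    (fun e => max_lt (lunarDigit_lt hB0 x e) (lunarDigit_lt hB0 y e))]
  split_ifs with hd
  · rfl
  · have hpow (n : ℕ) (hn : n < d) : n < B ^ d :=
      hn.trans (Nat.lt_pow_self (by omega))
    rw [lunarDigit_eq_zero_of_lt_pow (hpow x (by omega)),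
      lunarDigit_eq_zero_of_lt_pow (hpow y (by omega)), max_self]

lemma lunarAdd_mul_pow (hB : 2 ≤ B) {a b : ℕ} (ha : a < B) (hb : b < B) (d : ℕ) :
    lunarAdd B (a * B ^ d) (b * B ^ d) = max a b * B ^ d := by
  have hB0 : 0 < B := by omega
  rcases Nat.eq_zero_or_pos (max a b) with hab | hab
  · obtain ⟨rfl, rfl⟩ : a = 0 ∧ b = 0 := by omega
    simp [lunarAdd, lunarDigit]
  have hd : d < a * B ^ d + b * B ^ d + 1 := by
    have : d < B ^ d := Nat.lt_pow_self (by omega)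
    rcases le_total a b with h | h
    · nlinarith [max_eq_right h]
    · nlinarith [max_eq_left h]
  rw [lunarAdd, Finset.sum_eq_single_of_mem d (Finset.mem_range.mpr hd)]
  · simp [lunarDigit_mul_pow hB0 ha, lunarDigit_mul_pow hB0 hb]
  · intro e _ he
    simp [lunarDigit_mul_pow hB0 ha, lunarDigit_mul_pow hB0 hb, he]

lemma lunarAdd_lunarAdd_digit_mul_pow (hB : 2 ≤ B) {p q r T : ℕ}
    (h : lunarAdd B (lunarAdd B p q) r = T) (d : ℕ) :
    lunarAdd B (lunarAdd B (lunarDigit B p d * B ^ d) (lunarDigit B q d * B ^ d))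
      (lunarDigit B r d * B ^ d) = lunarDigit B T d * B ^ d := by
  have hB0 : 0 < B := by omega
  rw [lunarAdd_mul_pow hB (lunarDigit_lt hB0 p d) (lunarDigit_lt hB0 q d),
    lunarAdd_mul_pow hB (max_lt (lunarDigit_lt hB0 p d) (lunarDigit_lt hB0 q d))
      (lunarDigit_lt hB0 r d), ← h, lunarDigit_lunarAdd hB, lunarDigit_lunarAdd hB]

end LunarDigits

theorem stmt_5 (B : ℕ) (hB : 2 ≤ B) (M : Fin 3 → Fin 3 → ℕ) (T : ℕ)
    (hM : IsLunarMagic B M T) (d : ℕ) :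
    IsLunarMagic B (fun i j => lunarDigit B (M i j) d * B ^ d)
      (lunarDigit B T d * B ^ d) := by
  obtain ⟨hrows, hcols, hdiag, hanti⟩ := hM
  exact ⟨fun i => lunarAdd_lunarAdd_digit_mul_pow hB (hrows i) d,
    fun j => lunarAdd_lunarAdd_digit_mul_pow hB (hcols j) d,
    lunarAdd_lunarAdd_digit_mul_pow hB hdiag d, lunarAdd_lunarAdd_digit_mul_pow hB hanti d⟩
end

section
/- The 3×3 matrix whose entries are the base-10 lunar squares of [[44, 38, 45], [46, 0, 28], [18, 47, 8]] (namely [[444, 338, 445], [446, 0, 228], [118, 447, 8]]) is a base-10 lunar magic square with pairwise distinct entries whose total is the lunar square of 48, namely 448. -/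
set_option maxRecDepth 10000


/-- The base-`B` lunar square of `m`. -/
def lunarSq (B m : ℕ) : ℕ := lunarMul B m m

lemma lunarAdd_eq10 (x y n : ℕ) (hx : x < 10 ^ n) (hy : y < 10 ^ n) (hn : n ≤ x + y + 1) :
    lunarAdd 10 x y = ∑ d ∈ Finset.range n, max (lunarDigit 10 x d) (lunarDigit 10 y d) * 10 ^ d := by
  unfold lunarAdd
  symm
  apply Finset.sum_subset (Finset.range_subset_range.2 hn)
  intro d _ hd
  have hd' : n ≤ d := le_of_not_gt (fun h => hd (Finset.mem_range.2 h))
  have hp : (10:ℕ) ^ n ≤ 10 ^ d := Nat.pow_le_pow_right (by norm_num) hd'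
  have hx0 : lunarDigit 10 x d = 0 := by
    unfold lunarDigit; rw [Nat.div_eq_of_lt (lt_of_lt_of_le hx hp)]
  have hy0 : lunarDigit 10 y d = 0 := by
    unfold lunarDigit; rw [Nat.div_eq_of_lt (lt_of_lt_of_le hy hp)]
  simp [hx0, hy0]

lemma ladd (x y v : ℕ) (hx : x < 1000) (hy : y < 1000) (hn : 2 ≤ x + y)
    (h : ∑ d ∈ Finset.range 3, max (lunarDigit 10 x d) (lunarDigit 10 y d) * 10 ^ d = v) :
    lunarAdd 10 x y = v := by
  rw [lunarAdd_eq10 x y 3 (by norm_num [hx]) (by norm_num [hy]) (by omega)]; exact h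

lemma ladd3 (x y z v w : ℕ) (hx : x < 1000) (hy : y < 1000) (hz : z < 1000) (hv : v < 1000)
    (hxy : 2 ≤ x + y) (hvz : 2 ≤ v + z)
    (h1 : ∑ d ∈ Finset.range 3, max (lunarDigit 10 x d) (lunarDigit 10 y d) * 10 ^ d = v)
    (h2 : ∑ d ∈ Finset.range 3, max (lunarDigit 10 v d) (lunarDigit 10 z d) * 10 ^ d = w) :
    lunarAdd 10 (lunarAdd 10 x y) z = w := by
  rw [ladd x y v hx hy hxy h1]; exact ladd v z w hv hz hvz h2

theorem stmt_9 :
    (∀ i j, lunarSq 10 (![![44, 38, 45], ![46, 0, 28], ![18, 47, 8]] i j)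
      = ![![444, 338, 445], ![446, 0, 228], ![118, 447, 8]] i j) ∧
    IsLunarMagic 10
      (fun i j => lunarSq 10 (![![44, 38, 45], ![46, 0, 28], ![18, 47, 8]] i j))
      (lunarSq 10 48) ∧
    lunarSq 10 48 = 448 ∧
    DistinctEntries
      (fun i j => lunarSq 10 (![![44, 38, 45], ![46, 0, 28], ![18, 47, 8]] i j)) := by
  have h1 : (∀ i j, lunarSq 10 (![![44, 38, 45], ![46, 0, 28], ![18, 47, 8]] i j)
      = ![![444, 338, 445], ![446, 0, 228], ![118, 447, 8]] i j) := by decide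
  have hkey : (fun i j => lunarSq 10 (![![44, 38, 45], ![46, 0, 28], ![18, 47, 8]] i j))
      = ![![444, 338, 445], ![446, 0, 228], ![118, 447, 8]] := by
    funext i j; exact h1 i j
  have h48 : lunarSq 10 48 = 448 := by decide
  refine ⟨h1, ?_, h48, ?_⟩
  · rw [hkey, h48]
    refine ⟨?_, ?_, ?_, ?_⟩
    · intro i
      fin_cases i
      · exact ladd3 444 338 445 448 448 (by norm_num) (by norm_num) (by norm_num) (by norm_num)
          (by norm_num) (by norm_num) (by decide) (by decide)
      · exact ladd3 446 0 228 446 448 (by norm_num) (by norm_num) (by norm_num) (by norm_num)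
          (by norm_num) (by norm_num) (by decide) (by decide)
      · exact ladd3 118 447 8 448 448 (by norm_num) (by norm_num) (by norm_num) (by norm_num)
          (by norm_num) (by norm_num) (by decide) (by decide)
    · intro j
      fin_cases j
      · exact ladd3 444 446 118 446 448 (by norm_num) (by norm_num) (by norm_num) (by norm_num)
          (by norm_num) (by norm_num) (by decide) (by decide)
      · exact ladd3 338 0 447 338 448 (by norm_num) (by norm_num) (by norm_num) (by norm_num)
          (by norm_num) (by norm_num) (by decide) (by decide)
      · exact ladd3 445 228 8 448 448 (by norm_num) (by norm_num) (by norm_num) (by norm_num)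
          (by norm_num) (by norm_num) (by decide) (by decide)
    · exact ladd3 444 0 8 444 448 (by norm_num) (by norm_num) (by norm_num) (by norm_num)
        (by norm_num) (by norm_num) (by decide) (by decide)
    · exact ladd3 445 0 118 445 448 (by norm_num) (by norm_num) (by norm_num) (by norm_num)
        (by norm_num) (by norm_num) (by decide) (by decide)
  · have hd : DistinctEntries ![![444, 338, 445], ![446, 0, 228], ![118, 447, 8]] := by
      unfold DistinctEntries; decide
    intro i j i' j' h
    exact hd i j i' j' (by rw [← h1 i j, ← h1 i' j']; exact h)
end

section
/- Natural numbers whose base-B digits satisfy, for every i, that the (i+1)-st base-B digit is at most the i-th base-B digit (positions counted from the least significant digit, for positions up to the leading digit) are closed under base-B lunar addition and base-B lunar multiplication: if x and y both have this property, then so do x ⊕ y and x ⊗ y. -/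
/-- `n` has weakly decreasing base-`B` digits: for every position `d` up to and
including the leading digit, the `(d+1)`-st digit is at most the `d`-th digit. -/
def WeaklyDecDigits (B n : ℕ) : Prop :=
  ∀ d, B ^ (d + 1) ≤ n * B → lunarDigit B n (d + 1) ≤ lunarDigit B n d

lemma digit_lt {B : ℕ} (hB : 0 < B) (n d : ℕ) : lunarDigit B n d < B :=
  Nat.mod_lt _ hB

lemma digit_zero_of_le {B n d : ℕ} (hB : 2 ≤ B) (h : n ≤ d) :
    lunarDigit B n d = 0 := by
  have h1 : n < B ^ d := by
    calc n < 2 ^ n := Nat.lt_two_pow_self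
    _ ≤ 2 ^ d := Nat.pow_le_pow_right (by norm_num) h
    _ ≤ B ^ d := Nat.pow_le_pow_left hB d
  simp [lunarDigit, Nat.div_eq_of_lt h1]

lemma sum_div_base {B : ℕ} (c : ℕ → ℕ) (h0 : c 0 < B) (N : ℕ) :
    (∑ i ∈ Finset.range N, c i * B ^ i) / B
      = ∑ i ∈ Finset.range (N - 1), c (i + 1) * B ^ i := by
  have hB : 0 < B := lt_of_le_of_lt (Nat.zero_le _) h0
  cases N with
  | zero => simp
  | succ M =>
    rw [Finset.sum_range_succ']
    have h2 : ∑ i ∈ Finset.range M, c (i + 1) * B ^ (i + 1)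
        = B * ∑ i ∈ Finset.range M, c (i + 1) * B ^ i := by
      rw [Finset.mul_sum]
      exact Finset.sum_congr rfl fun i _ => by ring
    rw [h2]
    simp only [pow_zero, mul_one, Nat.succ_sub_one]
    rw [Nat.mul_add_div hB, Nat.div_eq_of_lt h0, add_zero]

lemma sum_div_pow {B : ℕ} (c : ℕ → ℕ) (hc : ∀ i, c i < B) (N d : ℕ) :
    (∑ i ∈ Finset.range N, c i * B ^ i) / B ^ d
      = ∑ i ∈ Finset.range (N - d), c (d + i) * B ^ i := by
  induction d with
  | zero => simp
  | succ d ih =>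
    rw [pow_succ, ← Nat.div_div_eq_div_mul, ih,
      sum_div_base (fun i => c (d + i)) (by simpa using hc d)]
    rw [Nat.sub_sub]
    exact Finset.sum_congr rfl fun i _ => by
      rw [show d + (i + 1) = d + 1 + i from by omega]

lemma digit_sum {B : ℕ} (hB : 0 < B) (c : ℕ → ℕ) (hc : ∀ i, c i < B)
    (N : ℕ) (hN : ∀ i, N ≤ i → c i = 0) (d : ℕ) :
    lunarDigit B (∑ i ∈ Finset.range N, c i * B ^ i) d = c d := by
  unfold lunarDigit
  rw [sum_div_pow c hc]
  rcases Nat.lt_or_ge d N with h | h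
  · obtain ⟨m, hm⟩ : ∃ m, N - d = m + 1 := ⟨N - d - 1, by omega⟩
    rw [hm, Finset.sum_range_succ']
    have h2 : ∑ i ∈ Finset.range m, c (d + (i + 1)) * B ^ (i + 1)
        = B * ∑ i ∈ Finset.range m, c (d + (i + 1)) * B ^ i := by
      rw [Finset.mul_sum]
      exact Finset.sum_congr rfl fun i _ => by ring
    rw [h2]
    simp only [pow_zero, mul_one, add_zero]
    rw [Nat.mul_add_mod, Nat.mod_eq_of_lt (hc d)]
  · rw [Nat.sub_eq_zero_of_le h]
    simp [hN d h]

lemma weakdec_of {B n : ℕ}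
    (h : ∀ d, lunarDigit B n (d + 1) ≤ lunarDigit B n d) :
    WeaklyDecDigits B n := fun d _ => h d

lemma weakdec_mono {B n : ℕ} (hB : 0 < B) (h : WeaklyDecDigits B n) :
    ∀ d, lunarDigit B n (d + 1) ≤ lunarDigit B n d := by
  intro d
  by_cases hd : B ^ (d + 1) ≤ n * B
  · exact h d hd
  · have h1 : n < B ^ d := by
      by_contra h'
      push_neg at h'
      exact hd (by rw [pow_succ]; exact Nat.mul_le_mul_right B h')
    have h2 : n < B ^ (d + 1) :=
      lt_of_lt_of_le h1 (Nat.pow_le_pow_right hB (Nat.le_succ d))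
    simp [lunarDigit, Nat.div_eq_of_lt h2]

lemma lunarAdd_digit {B : ℕ} (hB : 2 ≤ B) (x y d : ℕ) :
    lunarDigit B (lunarAdd B x y) d
      = max (lunarDigit B x d) (lunarDigit B y d) := by
  have hB0 : 0 < B := by omega
  exact digit_sum hB0 _ (fun i => max_lt (digit_lt hB0 x i) (digit_lt hB0 y i))
    _ (fun i hi => by
      rw [digit_zero_of_le hB (show x ≤ i by omega),
        digit_zero_of_le hB (show y ≤ i by omega)]
      simp) d

lemma lunarMul_digit {B : ℕ} (hB : 2 ≤ B) (x y d : ℕ) :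
    lunarDigit B (lunarMul B x y) d
      = (Finset.range (d + 1)).sup
          fun j => min (lunarDigit B x j) (lunarDigit B y (d - j)) := by
  have hB0 : 0 < B := by omega
  refine digit_sum hB0 _ (fun i => ?_) _ (fun i hi => ?_) d
  · rw [Finset.sup_lt_iff (show (⊥ : ℕ) < B from hB0)]
    intro j _
    exact lt_of_le_of_lt (min_le_left _ _) (digit_lt hB0 x j)
  · refine Nat.le_zero.mp (Finset.sup_le fun j hj => ?_)
    simp only [Finset.mem_range] at hj
    rcases Nat.lt_or_ge j (x + 1) with hx' | hx'
    · rw [digit_zero_of_le hB (show y ≤ i - j by omega)]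
      simp
    · rw [digit_zero_of_le hB (show x ≤ j by omega)]
      simp

theorem stmt_11 (B x y : ℕ) (hB : 2 ≤ B)
    (hx : WeaklyDecDigits B x) (hy : WeaklyDecDigits B y) :
    WeaklyDecDigits B (lunarAdd B x y) ∧ WeaklyDecDigits B (lunarMul B x y) := by
  have hB0 : 0 < B := by omega
  have hx' := weakdec_mono hB0 hx
  have hy' := weakdec_mono hB0 hy
  constructor
  · refine weakdec_of fun d => ?_
    rw [lunarAdd_digit hB, lunarAdd_digit hB]
    exact max_le_max (hx' d) (hy' d)
  · refine weakdec_of fun d => ?_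
    rw [lunarMul_digit hB, lunarMul_digit hB]
    refine Finset.sup_le fun j hj => ?_
    simp only [Finset.mem_range] at hj
    match j with
    | 0 =>
      calc min (lunarDigit B x 0) (lunarDigit B y (d + 1 - 0))
          ≤ min (lunarDigit B x 0) (lunarDigit B y (d - 0)) := by
            simpa using min_le_min le_rfl (hy' d)
        _ ≤ _ := Finset.le_sup
            (f := fun j => min (lunarDigit B x j) (lunarDigit B y (d - j)))
            (Finset.mem_range.mpr (show 0 < d + 1 by omega))
    | j + 1 =>
      calc min (lunarDigit B x (j + 1)) (lunarDigit B y (d + 1 - (j + 1)))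
          ≤ min (lunarDigit B x j) (lunarDigit B y (d - j)) := by
            rw [Nat.succ_sub_succ]
            exact min_le_min (hx' j) le_rfl
        _ ≤ _ := Finset.le_sup
            (f := fun j => min (lunarDigit B x j) (lunarDigit B y (d - j)))
            (Finset.mem_range.mpr (show j < d + 1 by omega))
end

section
/- For every n ≥ 1, the 3×3 matrix whose entries are the n-th base-10 lunar powers of [[1447, 1347, 1444], [1446, 0, 1247], [1147, 1445, 1]] is a base-10 lunar magic square with pairwise distinct entries. -/
/-- The `n`-th base-`B` lunar power of `a` (so `lunarPow B a 1 = a`, and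
`lunarPow B a 0` is the lunar multiplicative identity `B - 1`). -/
def lunarPow (B a : ℕ) : ℕ → ℕ
  | 0 => B - 1
  | 1 => a
  | n + 2 => lunarMul B a (lunarPow B a (n + 1))

/-! Every entry of the square has a nonincreasing digit string, read from the least significant
digit. For such an `x` the `n`-th lunar power just stretches that string by the factor `n`: its
digit in position `d` is the digit of `x` in position `⌈d / n⌉`, because the best way to write `d`
as a sum of `n` positions is to spread it evenly. Stretching commutes with taking digitwise
maxima and loses no information, so `x ↦ x ^ n` is an injective lunar-additive map on such
numbers, and both the magic property and the distinctness of the entries carry over from the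
case `n = 1`, which is a finite computation. -/

section Digits

variable {B : ℕ}

lemma lunarDigit_zero (n : ℕ) : lunarDigit B n 0 = n % B := by
  simp [lunarDigit]

lemma lunarDigit_succ (n d : ℕ) : lunarDigit B n (d + 1) = lunarDigit B (n / B) d := by
  simp only [lunarDigit, pow_succ', Nat.div_div_eq_div_mul]

lemma lunarDigit_eq_zero_of_le (hB : 2 ≤ B) {n d : ℕ} (h : n ≤ d) : lunarDigit B n d = 0 :=
  lunarDigit_eq_zero_of_lt_pow <|
    (Nat.lt_pow_self hB).trans_le (Nat.pow_le_pow_right (by omega) h)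

lemma eq_of_lunarDigit_eq (hB : 2 ≤ B) {x y : ℕ} (h : ∀ d, lunarDigit B x d = lunarDigit B y d) :
    x = y := by
  induction hs : x + y using Nat.strong_induction_on generalizing x y with
  | _ s ih =>
  rcases Nat.eq_zero_or_pos s with rfl | hs0
  · omega
  have hx : 2 * (x / B) ≤ x := (Nat.mul_le_mul_right _ hB).trans (Nat.mul_div_le x B)
  have hy : 2 * (y / B) ≤ y := (Nat.mul_le_mul_right _ hB).trans (Nat.mul_div_le y B)
  have hdiv : x / B = y / B :=
    ih _ (by omega) (fun d => by simpa only [lunarDigit_succ] using h (d + 1)) rfl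
  have hmod : x % B = y % B := by simpa only [lunarDigit_zero] using h 0
  rw [← Nat.mod_add_div x B, ← Nat.mod_add_div y B, hdiv, hmod]

lemma lunarDigit_sum_mul_pow {f : ℕ → ℕ} (hf : ∀ d, f d < B) (N e : ℕ) :
    lunarDigit B (∑ d ∈ Finset.range N, f d * B ^ d) e = if e < N then f e else 0 := by
  have hB : 0 < B := (Nat.zero_le _).trans_lt (hf 0)
  induction N generalizing f e with
  | zero => simp [lunarDigit]
  | succ N ih =>
    have hsum : ∑ d ∈ Finset.range (N + 1), f d * B ^ d =
        f 0 + B * ∑ d ∈ Finset.range N, f (d + 1) * B ^ d := by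
      rw [Finset.sum_range_succ', Finset.mul_sum, add_comm]
      simp only [pow_succ', pow_zero, mul_one, mul_left_comm]
    rw [hsum]
    cases e with
    | zero => simp [lunarDigit_zero, Nat.add_mul_mod_self_left, Nat.mod_eq_of_lt (hf 0)]
    | succ e =>
      rw [lunarDigit_succ, Nat.add_mul_div_left _ _ hB, Nat.div_eq_of_lt (hf 0), zero_add,
        ih (fun d => hf (d + 1))]
      simp only [Nat.add_lt_add_iff_right]

lemma lunarDigit_lunarMul (hB : 2 ≤ B) (x y d : ℕ) :
    lunarDigit B (lunarMul B x y) d =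
      (Finset.range (d + 1)).sup fun j => min (lunarDigit B x j) (lunarDigit B y (d - j)) := by
  have hB0 : 0 < B := by omega
  rw [lunarMul, lunarDigit_sum_mul_pow fun e => (Finset.sup_lt_iff hB0).2
    fun j _ => (min_le_left _ _).trans_lt (lunarDigit_lt hB0 x j)]
  split_ifs with h
  · rfl
  · refine (Nat.eq_zero_of_le_zero <| Finset.sup_le fun j hj => ?_).symm
    rw [Finset.mem_range] at hj
    rcases le_or_gt x j with hxj | hxj
    · simp [lunarDigit_eq_zero_of_le hB hxj]
    · simp [lunarDigit_eq_zero_of_le hB (show y ≤ d - j by omega)]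

lemma antitone_lunarDigit_of_lt_pow {x L : ℕ} (hx : x < B ^ (L + 1))
    (h : ∀ d < L, lunarDigit B x (d + 1) ≤ lunarDigit B x d) : Antitone (lunarDigit B x) := by
  have hB : 0 < B := Nat.pos_of_ne_zero (by rintro rfl; simp at hx)
  refine antitone_nat_of_succ_le fun d => ?_
  rcases lt_or_ge d L with hd | hd
  · exact h d hd
  · rw [lunarDigit_eq_zero_of_lt_pow (hx.trans_le (Nat.pow_le_pow_right hB (by omega)))]
    exact Nat.zero_le _

lemma antitone_lunarDigit_lunarAdd (hB : 2 ≤ B) {x y : ℕ} (hx : Antitone (lunarDigit B x))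
    (hy : Antitone (lunarDigit B y)) : Antitone (lunarDigit B (lunarAdd B x y)) := fun a b hab => by
  simpa only [lunarDigit_lunarAdd hB] using max_le_max (hx hab) (hy hab)

end Digits

section Powers

variable {B : ℕ}

lemma lunarPow_succ (a : ℕ) {n : ℕ} (hn : 1 ≤ n) :
    lunarPow B a (n + 1) = lunarMul B a (lunarPow B a n) := by
  obtain ⟨m, rfl⟩ := Nat.exists_eq_add_of_le' hn
  rfl

/-- In `x ⊗ x ^ n`, the digit in position `d` is the largest digit of `x` in a position
`max j ⌈(d - j) / n⌉`; that index is never below `⌈d / (n + 1)⌉` and equals it for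
`j = ⌈d / (n + 1)⌉`. -/
theorem lunarDigit_lunarPow_of_antitone (hB : 2 ≤ B) {x : ℕ} (hx : Antitone (lunarDigit B x))
    {n : ℕ} (hn : 1 ≤ n) (d : ℕ) : lunarDigit B (lunarPow B x n) d = lunarDigit B x (d ⌈/⌉ n) := by
  induction n, hn using Nat.le_induction generalizing d with
  | base => simp [lunarPow]
  | succ n hn ih =>
    have hn0 : 0 < n := hn
    have hn1 : 0 < n + 1 := n.succ_pos
    set k := d ⌈/⌉ (n + 1)
    have hdk : d ≤ (n + 1) * k := (ceilDiv_le_iff_le_mul hn1).1 le_rfl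
    simp only [lunarPow_succ x hn, lunarDigit_lunarMul hB, ih, ← hx.map_max]
    refine le_antisymm (Finset.sup_le fun j hj => hx ?_) ?_
    · have hjd := Finset.mem_range.1 hj
      set c := (d - j) ⌈/⌉ n
      have hc : d - j ≤ n * c := (ceilDiv_le_iff_le_mul hn0).1 le_rfl
      have hcj := Nat.mul_le_mul_left n (le_max_right j c)
      rw [ceilDiv_le_iff_le_mul hn1, add_one_mul]
      omega
    · have hkd : k ≤ d := (ceilDiv_le_iff_le_mul hn1).2 (Nat.le_mul_of_pos_left d hn1)
      have hrest : (d - k) ⌈/⌉ n ≤ k := (ceilDiv_le_iff_le_mul hn0).2 (by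
        rw [add_one_mul] at hdk; omega)
      refine le_of_eq_of_le ?_ (Finset.le_sup (Finset.mem_range.2 (Nat.lt_succ_of_le hkd)))
      rw [max_eq_left hrest]

theorem lunarPow_lunarAdd_of_antitone (hB : 2 ≤ B) {x y : ℕ} (hx : Antitone (lunarDigit B x))
    (hy : Antitone (lunarDigit B y)) {n : ℕ} (hn : 1 ≤ n) :
    lunarPow B (lunarAdd B x y) n = lunarAdd B (lunarPow B x n) (lunarPow B y n) :=
  eq_of_lunarDigit_eq hB fun d => by
    rw [lunarDigit_lunarPow_of_antitone hB (antitone_lunarDigit_lunarAdd hB hx hy) hn,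
      lunarDigit_lunarAdd hB, lunarDigit_lunarAdd hB, lunarDigit_lunarPow_of_antitone hB hx hn,
      lunarDigit_lunarPow_of_antitone hB hy hn]

theorem lunarPow_injOn_antitone (hB : 2 ≤ B) {n : ℕ} (hn : 1 ≤ n) :
    Set.InjOn (lunarPow B · n) {x | Antitone (lunarDigit B x)} := fun x hx y hy hxy =>
  eq_of_lunarDigit_eq hB fun k => by
    have := congrArg (lunarDigit B · (n * k)) hxy
    simpa only [lunarDigit_lunarPow_of_antitone hB hx hn, lunarDigit_lunarPow_of_antitone hB hy hn,
      ← smul_eq_mul, smul_ceilDiv (show 0 < n from hn)] using this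

end Powers

section MagicSquares

variable {B : ℕ} {M : Fin 3 → Fin 3 → ℕ}

lemma lunarPow_lunarAdd₃_of_antitone (hB : 2 ≤ B) {x y z : ℕ} (hx : Antitone (lunarDigit B x))
    (hy : Antitone (lunarDigit B y)) (hz : Antitone (lunarDigit B z)) {n : ℕ} (hn : 1 ≤ n) :
    lunarAdd B (lunarAdd B (lunarPow B x n) (lunarPow B y n)) (lunarPow B z n) =
      lunarPow B (lunarAdd B (lunarAdd B x y) z) n := by
  rw [lunarPow_lunarAdd_of_antitone hB (antitone_lunarDigit_lunarAdd hB hx hy) hz hn,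
    lunarPow_lunarAdd_of_antitone hB hx hy hn]

theorem IsLunarMagic.map_lunarPow (hB : 2 ≤ B) {T : ℕ} (hM : IsLunarMagic B M T)
    (hanti : ∀ i j, Antitone (lunarDigit B (M i j))) {n : ℕ} (hn : 1 ≤ n) :
    IsLunarMagic B (fun i j => lunarPow B (M i j) n) (lunarPow B T n) := by
  obtain ⟨hrow, hcol, hdiag₁, hdiag₂⟩ := hM
  have hline := fun {i j i' j' i'' j''} => lunarPow_lunarAdd₃_of_antitone hB (hanti i j)
    (hanti i' j') (hanti i'' j'') hn
  have hpow := fun {t : ℕ} (h : t = T) => congrArg (lunarPow B · n) h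
  exact ⟨fun i => hline.trans (hpow (hrow i)), fun j => hline.trans (hpow (hcol j)),
    hline.trans (hpow hdiag₁), hline.trans (hpow hdiag₂)⟩

theorem DistinctEntries.comp (hM : DistinctEntries M) {f : ℕ → ℕ} {s : Set ℕ}
    (hf : Set.InjOn f s) (hs : ∀ i j, M i j ∈ s) : DistinctEntries fun i j => f (M i j) :=
  fun i j i' j' h => hM i j i' j' (hf (hs i j) (hs i' j') h)

end MagicSquares

def moonSquare : Fin 3 → Fin 3 → ℕ :=
  ![![1447, 1347, 1444], ![1446, 0, 1247], ![1147, 1445, 1]]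

lemma isLunarMagic_moonSquare : IsLunarMagic 10 moonSquare 1447 := by
  unfold IsLunarMagic
  decide +kernel

lemma distinctEntries_moonSquare : DistinctEntries moonSquare := by
  unfold DistinctEntries
  decide

lemma antitone_lunarDigit_moonSquare (i j : Fin 3) : Antitone (lunarDigit 10 (moonSquare i j)) := by
  have hdigits : ∀ i j, moonSquare i j < 10 ^ 4 ∧
      ∀ d < 3, lunarDigit 10 (moonSquare i j) (d + 1) ≤ lunarDigit 10 (moonSquare i j) d := by
    decide
  exact antitone_lunarDigit_of_lt_pow (hdigits i j).1 (hdigits i j).2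

theorem stmt_14 (n : ℕ) (hn : 1 ≤ n) :
    (∃ T, IsLunarMagic 10
      (fun i j => lunarPow 10 (![![1447, 1347, 1444], ![1446, 0, 1247], ![1147, 1445, 1]] i j) n)
      T) ∧
    DistinctEntries
      (fun i j => lunarPow 10 (![![1447, 1347, 1444], ![1446, 0, 1247], ![1147, 1445, 1]] i j) n) :=
  ⟨⟨_, isLunarMagic_moonSquare.map_lunarPow (by norm_num) antitone_lunarDigit_moonSquare hn⟩,
    distinctEntries_moonSquare.comp (lunarPow_injOn_antitone (by norm_num) hn)
      antitone_lunarDigit_moonSquare⟩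
end

section
/- The 3×3 matrix whose entries are the base-10 lunar squares of [[39, 40, 29], [19, 33, 41], [42, 9, 43]] is a base-10 lunar magic square with pairwise distinct entries whose total is 439, and 439 is not a base-10 lunar square (there is no natural number m with m ⊗ m = 439); hence there exists a lunar magic square of lunar squares whose total is not itself a lunar square. -/
/-!
For `m < B²`, writing `m = aB + b`, the lunar square of `m` has the three digits
`a, min a b, b`; so `m ⊗ m = 439` would force `a = 4`, `b = 9` and a middle digit `4 ≠ 3`.
For `m ≥ B²` the leading digit of `m`, at position `q ≥ 2`, meets itself at position `2q`
of `m ⊗ m`, so `m ⊗ m ≥ B⁴ > 439`. The magic square itself is a finite check.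
-/

open Finset

def lunarMulCoeff (B x y d : ℕ) : ℕ :=
  (range (d + 1)).sup fun j => min (lunarDigit B x j) (lunarDigit B y (d - j))

lemma lunarMul_eq_sum (B x y : ℕ) :
    lunarMul B x y = ∑ d ∈ range (x + y + 1), lunarMulCoeff B x y d * B ^ d := rfl

lemma lunarDigit_eq_zero_of_lt {B n d : ℕ} (h : n < B ^ d) : lunarDigit B n d = 0 := by
  simp [lunarDigit, Nat.div_eq_of_lt h]

lemma lunarDigit_log_pos {B m : ℕ} (hB : 1 < B) (hm : m ≠ 0) :
    0 < lunarDigit B m (Nat.log B m) := by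
  have hlt : m / B ^ Nat.log B m < B := by
    rw [Nat.div_lt_iff_lt_mul (by positivity), ← pow_succ']
    exact Nat.lt_pow_succ_log_self hB m
  rw [lunarDigit, Nat.mod_eq_of_lt hlt]
  exact Nat.div_pos (Nat.pow_log_le_self B hm) (by positivity)

lemma min_lunarDigit_le_lunarMulCoeff (B x y j k : ℕ) :
    min (lunarDigit B x j) (lunarDigit B y k) ≤ lunarMulCoeff B x y (j + k) :=
  le_sup_of_le (mem_range.mpr (by omega) : j ∈ range (j + k + 1)) (by simp)

lemma lunarMulCoeff_eq_zero {B x y n k d : ℕ} (hB : 0 < B) (hx : x < B ^ n) (hy : y < B ^ k)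
    (hd : n + k ≤ d + 1) : lunarMulCoeff B x y d = 0 := by
  refine Nat.eq_zero_of_le_zero (Finset.sup_le fun j hj => ?_)
  rcases le_or_gt n j with hnj | hjn
  · rw [lunarDigit_eq_zero_of_lt (hx.trans_le (Nat.pow_le_pow_right hB hnj)), zero_min]
  · rw [lunarDigit_eq_zero_of_lt (hy.trans_le (Nat.pow_le_pow_right hB (by omega))), Nat.min_zero]

lemma lunarMulCoeff_mul_pow_le_lunarMul {B x y d : ℕ} (hd : d ≤ x + y) :
    lunarMulCoeff B x y d * B ^ d ≤ lunarMul B x y := by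
  rw [lunarMul_eq_sum]
  exact single_le_sum (f := fun d => lunarMulCoeff B x y d * B ^ d) (fun _ _ => Nat.zero_le _)
    (mem_range.mpr (by omega))

lemma sum_range_eq_of_eq_zero {M : Type*} [AddCommMonoid M] {f : ℕ → M} {a b : ℕ}
    (ha : ∀ d, a ≤ d → f d = 0) (hb : ∀ d, b ≤ d → f d = 0) :
    ∑ d ∈ range a, f d = ∑ d ∈ range b, f d := by
  wlog hab : a ≤ b generalizing a b
  · exact (this hb ha (by omega)).symm
  exact sum_subset (range_subset_range.mpr hab) fun d _ hd => ha d (by simpa using hd)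

lemma lunarMul_eq_sum_range {B x y n k N : ℕ} (hB : 1 < B) (hx : x < B ^ n) (hy : y < B ^ k)
    (hN : n + k ≤ N + 1) :
    lunarMul B x y = ∑ d ∈ range N, lunarMulCoeff B x y d * B ^ d := by
  have hB0 : 0 < B := by omega
  rw [lunarMul_eq_sum]
  refine sum_range_eq_of_eq_zero (fun d hd => ?_) (fun d hd => ?_)
  · rw [lunarMulCoeff_eq_zero hB0 (Nat.lt_pow_self hB) (Nat.lt_pow_self hB) (by omega), zero_mul]
  · rw [lunarMulCoeff_eq_zero hB0 hx hy (by omega), zero_mul]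

lemma lunarSq_of_lt_sq {B m : ℕ} (hB : 1 < B) (hm : m < B ^ 2) :
    lunarSq B m = m / B * B ^ 2 + min (m / B) (m % B) * B + m % B := by
  have hdigit0 : lunarDigit B m 0 = m % B := by simp [lunarDigit]
  have hdigit1 : lunarDigit B m 1 = m / B := by
    rw [lunarDigit, pow_one, Nat.mod_eq_of_lt (Nat.div_lt_of_lt_mul (by rwa [← sq]))]
  have hdigit2 : lunarDigit B m 2 = 0 := lunarDigit_eq_zero_of_lt hm
  rw [lunarSq, lunarMul_eq_sum_range hB hm hm (N := 3) (by omega)]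
  simp [range_add_one, lunarMulCoeff, hdigit0, hdigit1, hdigit2, add_assoc]

lemma pow_le_lunarSq {B m p : ℕ} (hB : 1 < B) (hm : B ^ p ≤ m) : B ^ (2 * p) ≤ lunarSq B m := by
  have hm0 : m ≠ 0 := (Nat.pos_of_ne_zero (by positivity)).trans_le hm |>.ne'
  set q := Nat.log B m
  have hpq : p ≤ q := Nat.le_log_of_pow_le hB hm
  have hqm : q ≤ m := (Nat.lt_pow_self hB).le.trans (Nat.pow_log_le_self B hm0)
  have hcoeff : 0 < lunarMulCoeff B m m (q + q) :=
    (lt_min (lunarDigit_log_pos hB hm0) (lunarDigit_log_pos hB hm0)).trans_le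
      (min_lunarDigit_le_lunarMulCoeff B m m q q)
  calc B ^ (2 * p) ≤ B ^ (q + q) := Nat.pow_le_pow_right (by omega) (by omega)
    _ ≤ lunarMulCoeff B m m (q + q) * B ^ (q + q) := Nat.le_mul_of_pos_left _ hcoeff
    _ ≤ lunarSq B m := lunarMulCoeff_mul_pow_le_lunarMul (by omega)

lemma not_exists_lunarSq_eq_439 : ¬ ∃ m, lunarSq 10 m = 439 := by
  rintro ⟨m, hm⟩
  rcases lt_or_ge m (10 ^ 2) with hlt | hge
  · rw [lunarSq_of_lt_sq (by norm_num) hlt] at hm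
    omega
  · have := pow_le_lunarSq (by norm_num) hge
    omega

lemma lunarSq_table :
    (fun i j => lunarSq 10 (![![39, 40, 29], ![19, 33, 41], ![42, 9, 43]] i j)) =
      ![![339, 400, 229], ![119, 333, 411], ![422, 9, 433]] := by
  funext i j
  fin_cases i <;> fin_cases j <;> simp [lunarSq_of_lt_sq]

set_option maxRecDepth 4000 in
lemma isLunarMagic_table :
    IsLunarMagic 10 ![![339, 400, 229], ![119, 333, 411], ![422, 9, 433]] 439 := by
  unfold IsLunarMagic
  decide

lemma distinctEntries_table :
    DistinctEntries ![![339, 400, 229], ![119, 333, 411], ![422, 9, 433]] := by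
  unfold DistinctEntries
  decide

theorem stmt_16 :
    IsLunarMagic 10
      (fun i j => lunarSq 10 (![![39, 40, 29], ![19, 33, 41], ![42, 9, 43]] i j)) 439 ∧
    DistinctEntries
      (fun i j => lunarSq 10 (![![39, 40, 29], ![19, 33, 41], ![42, 9, 43]] i j)) ∧
    ¬ ∃ m : ℕ, lunarSq 10 m = 439 := by
  rw [lunarSq_table]
  exact ⟨isLunarMagic_table, distinctEntries_table, not_exists_lunarSq_eq_439⟩
end
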